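/- Let β ∈ KL and suppose a nonnegative function v : ℝ≥0 → ℝ≥0 satisfies, for every 0 < c < 1, v(t) ≤ β(v(0), (1−c)t) + ρ∘ρ̄⁻¹(sup_{τ ≥ ct} v(τ)) for all t ≥ 0, where ρ∘ρ̄⁻¹(s) < s for s > 0, and v is bounded. Then v(t) → 0 as t → ∞. -/

import Mathlib

open Filter Set

/-- A class-K function (on `[0,∞)`). -/
def ClassK (γ : ℝ → ℝ) : Prop :=
  ContinuousOn γ (Set.Ici 0) ∧ StrictMonoOn γ (Set.Ici 0) ∧ γ 0 = 0 ∧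
    ∀ s, 0 ≤ s → 0 ≤ γ s

/-- A class-K∞ function. -/
def ClassKInf (γ : ℝ → ℝ) : Prop :=
  ClassK γ ∧ Filter.Tendsto γ Filter.atTop Filter.atTop

/-- A class-KL function: class-K in the first argument for each fixed time,
decreasing to zero in the second argument for each fixed first argument. -/
def ClassKL (β : ℝ → ℝ → ℝ) : Prop :=
  (∀ t, 0 ≤ t → ClassK (fun s => β s t)) ∧
  (∀ s, 0 ≤ s → AntitoneOn (fun t => β s t) (Set.Ici 0) ∧
      Filter.Tendsto (fun t => β s t) Filter.atTop (nhds 0))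

/-!
Let `S T := sup_{t ≥ T} v t`. It is antitone and nonnegative, hence converges to some `ℓ ≥ 0`.
Taking `c = 1/2` in the hypothesis and the supremum over `t ≥ T` gives
`S T ≤ β(v 0, T/2) + ρ(ρ̄⁻¹(S(T/2)))`; letting `T → ∞` yields `ℓ ≤ ρ(ρ̄⁻¹ ℓ)`, which the
small-gain condition only allows for `ℓ = 0`. Finally `0 ≤ v ≤ S` squeezes `v` to `0`.
-/

open Topology

lemma ClassK.monotoneOn {γ : ℝ → ℝ} (hγ : ClassK γ) : MonotoneOn γ (Ici 0) :=
  hγ.2.1.monotoneOn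

lemma ClassK.mapsTo {γ : ℝ → ℝ} (hγ : ClassK γ) : MapsTo γ (Ici 0) (Ici 0) :=
  hγ.2.2.2

lemma ClassK.comp {γ σ : ℝ → ℝ} (hγ : ClassK γ) (hσ : ClassK σ) : ClassK (γ ∘ σ) :=
  ⟨hγ.1.comp hσ.1 hσ.mapsTo, hγ.2.1.comp hσ.2.1 hσ.mapsTo,
    by simp only [Function.comp_apply, hσ.2.2.1, hγ.2.2.1],
    fun _ hs => hγ.mapsTo (hσ.mapsTo hs)⟩

noncomputable def tailSup (v : ℝ → ℝ) (T : ℝ) : ℝ := sSup (v '' Ici T)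

section tailSup

variable {v : ℝ → ℝ}

lemma le_tailSup (hv : BddAbove (range v)) {T t : ℝ} (ht : T ≤ t) : v t ≤ tailSup v T :=
  le_csSup (hv.mono (image_subset_range v _)) (mem_image_of_mem v ht)

lemma tailSup_le {T M : ℝ} (h : ∀ t, T ≤ t → v t ≤ M) : tailSup v T ≤ M :=
  csSup_le (nonempty_Ici.image v) (forall_mem_image.2 h)

lemma tailSup_nonneg (hv₀ : ∀ t, 0 ≤ v t) (hv : BddAbove (range v)) (T : ℝ) :
    0 ≤ tailSup v T :=
  (hv₀ T).trans (le_tailSup hv le_rfl)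

lemma tailSup_antitone (hv : BddAbove (range v)) : Antitone (tailSup v) := fun _ _ h =>
  csSup_le_csSup (hv.mono (image_subset_range v _)) (nonempty_Ici.image v)
    (image_mono (Ici_subset_Ici.2 h))

lemma exists_tendsto_tailSup (hv₀ : ∀ t, 0 ≤ v t) (hv : BddAbove (range v)) :
    ∃ ℓ, 0 ≤ ℓ ∧ Tendsto (tailSup v) atTop (𝓝 ℓ) :=
  ⟨⨅ T, tailSup v T, le_ciInf (tailSup_nonneg hv₀ hv),
    tendsto_atTop_ciInf (tailSup_antitone hv) ⟨0, forall_mem_range.2 (tailSup_nonneg hv₀ hv)⟩⟩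

lemma tendsto_of_tendsto_tailSup (hv₀ : ∀ t, 0 ≤ v t) (hv : BddAbove (range v))
    (h : Tendsto (tailSup v) atTop (𝓝 0)) : Tendsto v atTop (𝓝 0) :=
  tendsto_of_tendsto_of_tendsto_of_le_of_le tendsto_const_nhds h hv₀
    fun _ => le_tailSup hv le_rfl

lemma tailSup_le_add_gain (hv₀ : ∀ t, 0 ≤ v t) (hv : BddAbove (range v)) {b γ : ℝ → ℝ}
    (hb : AntitoneOn b (Ici 0)) (hγ : MonotoneOn γ (Ici 0))
    (h : ∀ t, 0 ≤ t → v t ≤ b (t / 2) + γ (tailSup v (t / 2))) {T : ℝ} (hT : 0 ≤ T) :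
    tailSup v T ≤ b (T / 2) + γ (tailSup v (T / 2)) := by
  refine tailSup_le fun t ht => (h t (hT.trans ht)).trans (add_le_add ?_ ?_)
  · exact hb (mem_Ici.2 (by linarith)) (mem_Ici.2 (by linarith)) (by linarith)
  · exact hγ (tailSup_nonneg hv₀ hv _) (tailSup_nonneg hv₀ hv _)
      (tailSup_antitone hv (by linarith))

end tailSup

lemma le_of_tendsto_of_le_add_gain {S b γ : ℝ → ℝ} {ℓ : ℝ} (hS : Tendsto S atTop (𝓝 ℓ))
    (hb : Tendsto b atTop (𝓝 0)) (hγ : ContinuousWithinAt γ (Ici 0) ℓ) (hS₀ : ∀ T, 0 ≤ S T)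
    (h : ∀ᶠ T in atTop, S T ≤ b (T / 2) + γ (S (T / 2))) : ℓ ≤ γ ℓ := by
  have hhalf : Tendsto (fun T : ℝ => T / 2) atTop atTop := tendsto_id.atTop_div_const two_pos
  have hγS : Tendsto (fun T => γ (S (T / 2))) atTop (𝓝 (γ ℓ)) :=
    hγ.tendsto.comp (tendsto_nhdsWithin_of_tendsto_nhds_of_eventually_within _
      (hS.comp hhalf) (Eventually.of_forall fun T => hS₀ _))
  simpa only [zero_add] using le_of_tendsto_of_tendsto hS ((hb.comp hhalf).add hγS) h

/-- Small-gain / asymptotic-gain step (cf. Lemma A.1 of Jiang–Teel–Praly):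
if a bounded nonnegative `v` satisfies, for every `0 < c < 1` and all `t ≥ 0`,
`v(t) ≤ β(v(0), (1−c)t) + ρ(ρ̄⁻¹(sup_{τ ≥ ct} v(τ)))`, where `β ∈ KL` and
`ρ∘ρ̄⁻¹(s) < s` for `s > 0`, then `v(t) → 0` as `t → ∞`. -/
theorem small_gain_convergence
    (β : ℝ → ℝ → ℝ) (hβ : ClassKL β)
    (ρ ρbarInv : ℝ → ℝ)
    (hρ : ClassKInf ρ) (hρbarInv : ClassKInf ρbarInv)
    (hsg : ∀ s : ℝ, 0 < s → ρ (ρbarInv s) < s)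
    (v : ℝ → ℝ)
    (hv_nonneg : ∀ t, 0 ≤ v t)
    (hv_bdd : BddAbove (Set.range v))
    (hbound : ∀ c : ℝ, c ∈ Set.Ioo (0:ℝ) 1 → ∀ t : ℝ, 0 ≤ t →
      v t ≤ β (v 0) ((1 - c) * t) + ρ (ρbarInv (sSup (v '' Set.Ici (c * t))))) :
    Tendsto v atTop (nhds 0) := by
  have hgain : ClassK (ρ ∘ ρbarInv) := hρ.1.comp hρbarInv.1
  obtain ⟨hβ_anti, hβ_lim⟩ := hβ.2 (v 0) (hv_nonneg 0)
  have hhalf : ∀ t, 0 ≤ t → v t ≤ β (v 0) (t / 2) + (ρ ∘ ρbarInv) (tailSup v (t / 2)) := by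
    intro t ht
    have h := hbound (1 / 2) ⟨by norm_num, by norm_num⟩ t ht
    rwa [show (1 - 1 / 2 : ℝ) * t = t / 2 by ring, show (1 / 2 : ℝ) * t = t / 2 by ring] at h
  obtain ⟨ℓ, hℓ₀, hℓ⟩ := exists_tendsto_tailSup hv_nonneg hv_bdd
  have hℓ_le : ℓ ≤ ρ (ρbarInv ℓ) :=
    le_of_tendsto_of_le_add_gain hℓ hβ_lim (hgain.1 ℓ hℓ₀) (tailSup_nonneg hv_nonneg hv_bdd)
      ((eventually_ge_atTop 0).mono fun _ hT =>
        tailSup_le_add_gain hv_nonneg hv_bdd hβ_anti hgain.monotoneOn hhalf hT)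
  have hℓ_zero : ℓ = 0 := hℓ₀.antisymm' (not_lt.1 fun hpos => (hsg ℓ hpos).not_ge hℓ_le)
  exact tendsto_of_tendsto_tailSup hv_nonneg hv_bdd (hℓ_zero ▸ hℓ)
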